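/- Let p_1 be a prime with p_1 ≡ 3 (mod 8), N = 2p_1, and let S ⊆ {1,…,p_1−1} be the set of nonzero quadratic residues modulo p_1. Let ξ_N ∈ ℂ be a primitive Nth root of unity and set ξ_{p_1} = ξ_N², and assume Σ_{j∈S} ξ_{p_1}^j = (−1 + i√(p_1))/2. Let I ⊆ {0,1,…,N−1} consist of 0, together with all odd j in [1,N−1] whose reduction modulo p_1 lies in S, together with all even j in [2,N−1] whose reduction modulo p_1 is a quadratic nonresidue modulo p_1. Then Σ_{i∈I} ξ_N^{-i} = 1 − i√(p_1). -/

import Mathlib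

/-!
Write `ζ = ξ ^ 2` and `χ` for the quadratic character mod `p`. Since `ξ ^ p = -1`, we have
`ξ ^ (-j) = (-1) ^ j * ζ ^ e` whenever `2 e ≡ -j (mod p)`. Every residue `a` mod `p` has exactly
one odd and one even representative in `[0, 2p)`; the odd ones in `I` are those with `χ a = 1`,
the even ones those with `χ a ≠ 1` (`0` and the nonresidues). Hence the sum over `I` is
`∑_a ± ζ ^ (-a/2)` with sign `-` exactly when `χ a = 1`. As `p ≡ 3 (mod 8)`, `-2` is a square
mod `p`, so `a ↦ -a/2` preserves `χ`, and the sum becomes `∑_a ζ ^ a - 2 ∑_{χ a = 1} ζ ^ a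
= -2 ∑_{j ∈ S} ζ ^ j`.
-/

open Finset

theorem IsPrimitiveRoot.pow_eq_neg_one_of_two_mul {R : Type*} [CommRing R] [NoZeroDivisors R]
    {ξ : R} {p : ℕ} (hξ : IsPrimitiveRoot ξ (2 * p)) (hp : 0 < p) : ξ ^ p = -1 :=
  (hξ.pow (by omega) (mul_comm 2 p)).eq_neg_one_of_two_right

theorem IsPrimitiveRoot.zpow_neg_natCast_eq {K : Type*} [Field K] {ξ : K} {p : ℕ}
    (hξ : IsPrimitiveRoot ξ (2 * p)) (hp : Odd p) {j e : ℕ} (h : p ∣ 2 * e + j) :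
    ξ ^ (-(j : ℤ)) = (-1) ^ j * (ξ ^ 2) ^ e := by
  obtain ⟨k, hk⟩ := h
  have hsign : (-1 : K) ^ j = (-1) ^ k := by
    calc (-1 : K) ^ j = (-1) ^ (2 * e + j) := by rw [pow_add, pow_mul, neg_one_sq, one_pow, one_mul]
      _ = (-1) ^ k := by rw [hk, pow_mul, hp.neg_one_pow]
  have hprod : (ξ ^ 2) ^ e * ξ ^ j = (-1) ^ j := by
    rw [← pow_mul, ← pow_add, hk, pow_mul, hξ.pow_eq_neg_one_of_two_mul hp.pos, hsign]
  rw [zpow_neg, zpow_natCast]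
  refine inv_eq_of_mul_eq_one_left ?_
  rw [mul_assoc, hprod, ← mul_pow]
  norm_num

theorem ZMod.sum_val_eq_sum_range {M : Type*} [AddCommMonoid M] (n : ℕ) [NeZero n]
    (f : ℕ → M) :
    ∑ a : ZMod n, f a.val = ∑ k ∈ range n, f k :=
  sum_nbij' ZMod.val (↑) (fun a _ => mem_range.2 (ZMod.val_lt a)) (fun _ _ => mem_univ _)
    (fun a _ => ZMod.natCast_zmod_val a) (fun _ hk => ZMod.val_cast_of_lt (mem_range.1 hk))
    (fun _ _ => rfl)

theorem Finset.sum_range_two_mul_eq_sum_zmod {M : Type*} [AddCommMonoid M] {p : ℕ} [NeZero p]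
    (hp : Odd p) (f : ℕ → ZMod p → M) :
    ∑ j ∈ range (2 * p), f (j % 2) j = ∑ a : ZMod p, (f 0 a + f 1 a) := by
  rw [two_mul, sum_range_add, ← ZMod.sum_val_eq_sum_range, ← ZMod.sum_val_eq_sum_range,
    ← sum_add_distrib]
  refine sum_congr rfl fun a _ => ?_
  have hshift : ((p + a.val : ℕ) : ZMod p) = a := by simp
  have hp2 : p % 2 = 1 := Nat.odd_iff.1 hp
  rw [hshift, ZMod.natCast_zmod_val]
  rcases Nat.mod_two_eq_zero_or_one a.val with h | h
  · rw [h, show (p + a.val) % 2 = 1 by omega]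
  · rw [h, show (p + a.val) % 2 = 0 by omega, add_comm]

theorem quadraticChar_eq_one_iff_exists_ne_zero_sq {F : Type*} [Field F] [Fintype F]
    [DecidableEq F] (a : F) : quadraticChar F a = 1 ↔ ∃ x, x ≠ 0 ∧ a = x ^ 2 := by
  constructor
  · intro h
    have ha : a ≠ 0 := fun h0 => by simp [h0] at h
    obtain ⟨x, rfl⟩ := (quadraticChar_one_iff_isSquare ha).1 h
    exact ⟨x, fun hx => ha (by simp [hx]), sq x ▸ rfl⟩
  · rintro ⟨x, hx, rfl⟩
    exact quadraticChar_sq_one' hx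

theorem ZMod.quadraticChar_neg_two_eq_one {p : ℕ} [Fact p.Prime] (hp : p % 8 = 3) :
    quadraticChar (ZMod p) (-2) = 1 := by
  rw [quadraticChar_neg_two (by rw [ZMod.ringChar_zmod_n]; omega), ZMod.card,
    χ₈'_nat_eq_if_mod_eight, if_neg (by omega), if_pos (Or.inr hp)]

def quadraticResidues (p : ℕ) [Fact p.Prime] : Finset ℕ :=
  {k ∈ range p | quadraticChar (ZMod p) k = 1}

theorem mod_mem_quadraticResidues_iff {p : ℕ} [Fact p.Prime] (j : ℕ) :
    j % p ∈ quadraticResidues p ↔ quadraticChar (ZMod p) j = 1 := by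
  rw [quadraticResidues, mem_filter, mem_range, ZMod.natCast_mod]
  exact and_iff_right (Nat.mod_lt j (Fact.out : p.Prime).pos)

theorem eq_quadraticResidues_of_forall_mem_iff {p : ℕ} [Fact p.Prime] {S : Finset ℕ}
    (hS : ∀ j : ℕ, j ∈ S ↔
      (1 ≤ j ∧ j ≤ p - 1 ∧ ∃ x : ZMod p, x ≠ 0 ∧ (j : ZMod p) = x ^ 2)) :
    S = quadraticResidues p := by
  have := (Fact.out : p.Prime).pos
  ext k
  rw [hS, quadraticResidues, mem_filter, mem_range, ← quadraticChar_eq_one_iff_exists_ne_zero_sq]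
  refine ⟨fun ⟨_, hk, h⟩ => ⟨by omega, h⟩, fun ⟨hk, h⟩ => ⟨?_, by omega, h⟩⟩
  rcases Nat.eq_zero_or_pos k with rfl | hpos
  · simp at h
  · exact hpos

theorem eq_filter_parity_iff_quadraticChar {p : ℕ} [Fact p.Prime] (hp : Odd p)
    {I : Finset ℕ} (hI : ∀ j : ℕ, j ∈ I ↔ (j = 0 ∨
      (j % 2 = 1 ∧ 1 ≤ j ∧ j ≤ 2 * p - 1 ∧ j % p ∈ quadraticResidues p) ∨
      (j % 2 = 0 ∧ 2 ≤ j ∧ j ≤ 2 * p - 1 ∧ j % p ≠ 0 ∧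
        j % p ∉ quadraticResidues p))) :
    I = {j ∈ range (2 * p) | (j : ℕ) % 2 = 1 ↔ quadraticChar (ZMod p) (j : ZMod p) = 1} := by
  have hp2 : p % 2 = 1 := Nat.odd_iff.1 hp
  have hχ_ne : ∀ j : ℕ, quadraticChar (ZMod p) j = 1 → j % p ≠ 0 := fun j h h0 => by
    rw [← ZMod.natCast_mod, h0, Nat.cast_zero, quadraticChar_zero] at h
    exact zero_ne_one h
  -- the only multiple of `p` in `(0, 2p)` is `p` itself, which is odd
  have h_even : ∀ j : ℕ, j % 2 = 0 → 0 < j → j < 2 * p → j % p ≠ 0 := by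
    intro j hj0 hpos hlt hmod
    rcases Nat.lt_or_ge j p with hjp | hjp
    · rw [Nat.mod_eq_of_lt hjp] at hmod
      omega
    · rw [Nat.mod_eq_sub_mod hjp, Nat.mod_eq_of_lt (by omega)] at hmod
      omega
  ext j
  rw [hI, mem_filter, mem_range, mod_mem_quadraticResidues_iff]
  rcases Nat.eq_zero_or_pos j with rfl | hpos
  · exact ⟨fun _ => ⟨by omega, by simp⟩, fun _ => Or.inl rfl⟩
  · have := hχ_ne j
    have := h_even j
    omega

theorem IsPrimitiveRoot.sum_ite_quadraticChar_eq {K : Type*} [Field K] {p : ℕ} [Fact p.Prime]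
    {ζ : K} (hζ : IsPrimitiveRoot ζ p) :
    ∑ b : ZMod p, (if quadraticChar (ZMod p) b = 1 then -ζ ^ b.val else ζ ^ b.val) =
      -2 * ∑ k ∈ quadraticResidues p, ζ ^ k := by
  calc _ = ∑ b : ZMod p, (ζ ^ b.val -
          2 * if quadraticChar (ZMod p) (b.val : ZMod p) = 1 then ζ ^ b.val else 0) := by
        refine sum_congr rfl fun b _ => ?_
        rw [ZMod.natCast_zmod_val]
        split_ifs <;> ring
    _ = ∑ k ∈ range p,
          (ζ ^ k - 2 * if quadraticChar (ZMod p) (k : ZMod p) = 1 then ζ ^ k else 0) :=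
        ZMod.sum_val_eq_sum_range p fun k =>
          ζ ^ k - 2 * if quadraticChar (ZMod p) (k : ZMod p) = 1 then ζ ^ k else 0
    _ = _ := by
        rw [sum_sub_distrib, hζ.geom_sum_eq_zero (Fact.out : p.Prime).one_lt, ← mul_sum,
          ← sum_filter, quadraticResidues]
        ring

theorem sum_zpow_neg_filter_quadraticChar {K : Type*} [Field K] {p : ℕ} [Fact p.Prime]
    (hp : p % 8 = 3) {ξ : K} (hξ : IsPrimitiveRoot ξ (2 * p)) :
    ∑ j ∈ range (2 * p) with ((j : ℕ) % 2 = 1 ↔ quadraticChar (ZMod p) (j : ZMod p) = 1),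
        ξ ^ (-(j : ℤ)) =
      -2 * ∑ k ∈ quadraticResidues p, (ξ ^ 2) ^ k := by
  set u : ZMod p := (-2)⁻¹
  have hp_odd : Odd p := (Fact.out : p.Prime).odd_of_ne_two (by omega)
  have hχ2 : quadraticChar (ZMod p) (-2) = 1 := ZMod.quadraticChar_neg_two_eq_one hp
  have hne : (-2 : ZMod p) ≠ 0 := fun h => by simp [h] at hχ2
  have h2u : -2 * u = 1 := mul_inv_cancel₀ hne
  have hχu : quadraticChar (ZMod p) u = 1 := by
    have := congrArg (quadraticChar (ZMod p)) h2u
    rwa [map_mul, map_one, hχ2, one_mul] at this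
  have hpow : ∀ j : ℕ,
      ξ ^ (-(j : ℤ)) = (-1) ^ (j % 2) * (ξ ^ 2) ^ ((j : ZMod p) * u).val := by
    intro j
    rw [← neg_one_pow_eq_pow_mod_two]
    refine hξ.zpow_neg_natCast_eq hp_odd ((ZMod.natCast_eq_zero_iff _ _).1 ?_)
    push_cast
    rw [ZMod.natCast_zmod_val]
    linear_combination (-(j : ZMod p)) * h2u
  let F : ℕ → ZMod p → K := fun r a =>
    if (r = 1 ↔ quadraticChar (ZMod p) a = 1) then (-1) ^ r * (ξ ^ 2) ^ (a * u).val else 0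
  let G : ZMod p → K := fun b =>
    if quadraticChar (ZMod p) b = 1 then -(ξ ^ 2) ^ b.val else (ξ ^ 2) ^ b.val
  calc _ = ∑ j ∈ range (2 * p), F (j % 2) j := by
        rw [sum_filter]
        exact sum_congr rfl fun j _ => by rw [hpow]
    _ = ∑ a, G (a * u) := by
        rw [Finset.sum_range_two_mul_eq_sum_zmod hp_odd]
        refine sum_congr rfl fun a _ => ?_
        simp only [G, F]
        rw [map_mul, hχu, mul_one]
        by_cases h : quadraticChar (ZMod p) a = 1 <;> simp [h, -quadraticChar_apply]
    _ = ∑ b, G b := Equiv.sum_comp (Equiv.mulRight₀ u (inv_ne_zero hne)) G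
    _ = -2 * ∑ k ∈ quadraticResidues p, (ξ ^ 2) ^ k :=
        (hξ.pow (Nat.mul_pos two_pos hp_odd.pos) rfl).sum_ite_quadraticChar_eq

/-- **Character sum over `I = ⟨p⟩ ∪ 2⟨p⟩ ∪ {0}`.**
Let `p₁` be a prime with `p₁ ≡ 3 (mod 8)`, `N = 2 p₁`, and let `S ⊆ {1, …, p₁-1}` be
the set of nonzero quadratic residues modulo `p₁`. Let `ξ_N ∈ ℂ` be a primitive `N`th
root of unity with `ξ_{p₁} = ξ_N²`, normalized so that `∑_{j ∈ S} ξ_{p₁}^j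
= (-1 + i√p₁)/2`. Let `I ⊆ {0, 1, …, N-1}` consist of `0`, all odd `j ∈ [1, N-1]` whose
reduction mod `p₁` lies in `S`, and all even `j ∈ [2, N-1]` whose reduction mod `p₁` is
a quadratic nonresidue mod `p₁`. Then `∑_{i ∈ I} ξ_N^{-i} = 1 - i√p₁`. -/
theorem sum_over_I_eq (p1 : ℕ) (hp1 : p1.Prime) (hp1mod : p1 % 8 = 3)
    (S : Finset ℕ)
    (hS : ∀ j : ℕ, j ∈ S ↔
      (1 ≤ j ∧ j ≤ p1 - 1 ∧ ∃ x : ZMod p1, x ≠ 0 ∧ (j : ZMod p1) = x ^ 2))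
    (ξ : ℂ) (hξ : IsPrimitiveRoot ξ (2 * p1))
    (hsum : ∑ j ∈ S, (ξ ^ 2) ^ j = (-1 + Complex.I * Real.sqrt p1) / 2)
    (I : Finset ℕ)
    (hI : ∀ j : ℕ, j ∈ I ↔ (j = 0 ∨
      (j % 2 = 1 ∧ 1 ≤ j ∧ j ≤ 2 * p1 - 1 ∧ j % p1 ∈ S) ∨
      (j % 2 = 0 ∧ 2 ≤ j ∧ j ≤ 2 * p1 - 1 ∧ j % p1 ≠ 0 ∧ j % p1 ∉ S))) :
    ∑ i ∈ I, ξ ^ (-(i : ℤ)) = 1 - Complex.I * Real.sqrt p1 := by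
  have := Fact.mk hp1
  obtain rfl : S = quadraticResidues p1 := eq_quadraticResidues_of_forall_mem_iff hS
  rw [eq_filter_parity_iff_quadraticChar (hp1.odd_of_ne_two (by omega)) hI,
    sum_zpow_neg_filter_quadraticChar hp1mod hξ, hsum]
  ring
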